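/- arXiv:2210.00584 — 5 statements merged into one kernel-verified Lean document; each statement's English description precedes it below -/
import Mathlib

section
/- Let C be a finite set of n clients, let 1 ≤ k ≤ n, let f : Finset Client → Label be a base FL algorithm, let y be a label, and let a, b be real numbers such that p_j(C, f) ≤ b for every label j ≠ y, b ≤ a, and a ≤ p_y(C, f). Let m be a natural number with m ≤ n − k satisfying ⌈a·C(n,k)⌉/C(n,k) − ⌊b·C(n,k)⌋/C(n,k) > 2 − 2·C(n−m,k)/C(n,k). Then for every finite set C' of clients with |C'| = n and |C' \ C| ≤ m, and for every label j ≠ y, one has N_j(C', f) < N_y(C', f); i.e., the majority vote over the k-element subsets of C' uniquely selects the label y. -/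
open Finset

/-- Label count: number of `k`-element subsets `T` of `S` with `f T = j`. -/
def labelCount {Client Label : Type} [DecidableEq Client] [DecidableEq Label]
    (k : ℕ) (f : Finset Client → Label) (S : Finset Client) (j : Label) : ℕ :=
  ((S.powersetCard k).filter (fun T => f T = j)).card

/-- Label probability: `N_j(S, f) / C(|S|, k)` as a real number. -/
noncomputable def labelProb {Client Label : Type} [DecidableEq Client] [DecidableEq Label]
    (k : ℕ) (f : Finset Client → Label) (S : Finset Client) (j : Label) : ℝ :=
  (labelCount k f S j : ℝ) / (Nat.choose S.card k : ℝ)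

/-!
Removing the clients of `C' \ C` and adding those of `C \ C'` only changes the votes of the
`k`-subsets not contained in `C ∩ C'`; there are at most `C(n, k) - C(n - m, k)` of them in each
of `C` and `C'`. So passing from `C` to `C'` lowers `N_y` and raises `N_j` by at most that many
votes each, and the certificate says the integer gap `⌈a C(n,k)⌉ - ⌊b C(n,k)⌋ ≤ N_y(C) - N_j(C)`
exceeds twice this amount.
-/

section LabelCount

variable {Client Label : Type} [DecidableEq Client] [DecidableEq Label]
  (k : ℕ) (f : Finset Client → Label)

lemma labelCount_mono {I S : Finset Client} (h : I ⊆ S) (j : Label) :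
    labelCount k f I j ≤ labelCount k f S j :=
  card_le_card (filter_subset_filter _ (powersetCard_mono h))

lemma labelCount_add_choose_le {I S : Finset Client} (h : I ⊆ S) (j : Label) :
    labelCount k f S j + I.card.choose k ≤ labelCount k f I j + S.card.choose k := by
  have hsplit : (S.powersetCard k).filter (fun T => f T = j) ⊆
      (I.powersetCard k).filter (fun T => f T = j) ∪ (S.powersetCard k \ I.powersetCard k) := by
    intro T hT
    rw [mem_filter] at hT
    by_cases hTI : T ∈ I.powersetCard k
    · exact mem_union_left _ (mem_filter.2 ⟨hTI, hT.2⟩)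
    · exact mem_union_right _ (mem_sdiff.2 ⟨hT.1, hTI⟩)
  have hcard := (card_le_card hsplit).trans (card_union_le _ _)
  rw [card_sdiff_of_subset (powersetCard_mono h), card_powersetCard, card_powersetCard] at hcard
  have hchoose : I.card.choose k ≤ S.card.choose k := Nat.choose_le_choose k (card_le_card h)
  unfold labelCount
  omega

lemma labelCount_add_choose_inter_le (S S' : Finset Client) (j : Label) :
    labelCount k f S' j + (S' ∩ S).card.choose k ≤ labelCount k f S j + S'.card.choose k :=
  (labelCount_add_choose_le k f inter_subset_left j).trans
    (Nat.add_le_add_right (labelCount_mono k f inter_subset_right j) _)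

variable {k f}

lemma ceil_mul_choose_le_labelCount {S : Finset Client} {j : Label} {a : ℝ}
    (hpos : 0 < S.card.choose k) (ha : a ≤ labelProb k f S j) :
    ⌈a * (S.card.choose k : ℝ)⌉ ≤ (labelCount k f S j : ℤ) := by
  rw [labelProb, le_div_iff₀ (by exact_mod_cast hpos)] at ha
  exact Int.ceil_le.2 (by exact_mod_cast ha)

lemma labelCount_le_floor_mul_choose {S : Finset Client} {j : Label} {b : ℝ}
    (hpos : 0 < S.card.choose k) (hb : labelProb k f S j ≤ b) :
    (labelCount k f S j : ℤ) ≤ ⌊b * (S.card.choose k : ℝ)⌋ := by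
  rw [labelProb, div_le_iff₀ (by exact_mod_cast hpos)] at hb
  exact Int.le_floor.2 (by exact_mod_cast hb)

end LabelCount

lemma two_mul_sub_lt_of_div_sub_div {p q : ℤ} {N w : ℕ} (hN : 0 < N)
    (h : (p : ℝ) / N - q / N > 2 - 2 * (w : ℝ) / N) : 2 * (N : ℤ) - 2 * w < p - q := by
  have hNR : (0 : ℝ) < N := by exact_mod_cast hN
  have hR : 2 * (N : ℝ) - 2 * w < p - q := by
    have := mul_lt_mul_of_pos_right h hNR
    field_simp at this
    linarith
  exact_mod_cast hR

theorem flcertP_certified_security_general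
    {Client Label : Type} [DecidableEq Client] [DecidableEq Label]
    (n k : ℕ) (hkn : k ≤ n)
    (C : Finset Client) (hC : C.card = n)
    (f : Finset Client → Label) (y : Label) (a b : ℝ)
    (hb : ∀ j : Label, j ≠ y → labelProb k f C j ≤ b)
    (ha : a ≤ labelProb k f C y)
    (m : ℕ)
    (hcert : (⌈a * (Nat.choose n k : ℝ)⌉ : ℝ) / (Nat.choose n k : ℝ)
           - (⌊b * (Nat.choose n k : ℝ)⌋ : ℝ) / (Nat.choose n k : ℝ)
           > 2 - 2 * (Nat.choose (n - m) k : ℝ) / (Nat.choose n k : ℝ)) :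
    ∀ C' : Finset Client, C'.card = n → (C' \ C).card ≤ m →
      ∀ j : Label, j ≠ y → labelCount k f C' j < labelCount k f C' y := by
  intro C' hC' hdiff j hj
  subst hC
  have hpos : 0 < C.card.choose k := Nat.choose_pos hkn
  have hinter : C.card - m ≤ (C' ∩ C).card := by
    have := card_sdiff_add_card_inter C' C
    omega
  have hW := Nat.choose_le_choose k hinter
  have hcount_j := labelCount_add_choose_inter_le k f C C' j
  have hcount_y := labelCount_add_choose_inter_le k f C' C y
  rw [inter_comm] at hcount_y
  rw [hC'] at hcount_j
  have hceil := ceil_mul_choose_le_labelCount hpos ha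
  have hfloor := labelCount_le_floor_mul_choose hpos (hb j hj)
  have hgap := two_mul_sub_lt_of_div_sub_div hpos hcert
  zify at hW hcount_j hcount_y ⊢
  linarith

theorem flcertP_certified_security
    {Client Label : Type} [DecidableEq Client] [DecidableEq Label]
    (n k : ℕ) (hk1 : 1 ≤ k) (hkn : k ≤ n)
    (C : Finset Client) (hC : C.card = n)
    (f : Finset Client → Label) (y : Label) (a b : ℝ)
    (hb : ∀ j : Label, j ≠ y → labelProb k f C j ≤ b)
    (hba : b ≤ a)
    (ha : a ≤ labelProb k f C y)
    (m : ℕ) (hm : m ≤ n - k)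
    (hcert : (⌈a * (Nat.choose n k : ℝ)⌉ : ℝ) / (Nat.choose n k : ℝ)
           - (⌊b * (Nat.choose n k : ℝ)⌋ : ℝ) / (Nat.choose n k : ℝ)
           > 2 - 2 * (Nat.choose (n - m) k : ℝ) / (Nat.choose n k : ℝ)) :
    ∀ C' : Finset Client, C'.card = n → (C' \ C).card ≤ m →
      ∀ j : Label, j ≠ y → labelCount k f C' j < labelCount k f C' y :=
  flcertP_certified_security_general n k hkn C hC f y a b hb ha m hcert
end

section
/- (Tightness of the certified security level.) Let C be a finite set of n clients, let 1 ≤ k ≤ n, and let y, z be distinct labels such that there exists a third label distinct from both. Let a, b be real numbers with 0 ≤ b ≤ a and a + b ≤ 1. Let C' be a finite set of clients with |C'| = n and m := |C' \ C| ≥ 1, and suppose the certification condition fails at m, i.e., ⌈a·C(n,k)⌉/C(n,k) − ⌊b·C(n,k)⌋/C(n,k) ≤ 2 − 2·C(n−m,k)/C(n,k) (where C(n−m,k) = 0 whenever n − m < k). Then there exists a function f : Finset Client → Label such that p_y(C, f) ≥ a, p_z(C, f) ≤ b, and N_z(C', f) ≥ N_y(C', f); i.e., the majority vote over the k-element subsets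 of C' does not uniquely select y. -/
open Finset

/-
Among the N = C(n, k) subsets of C and the N subsets of C', exactly M = C(n - m, k) are shared;
the N - M subsets of C' that meet C' \ C are invisible to p_y(C, f) and p_z(C, f), so they can all
vote z. Give y its A = ⌈a N⌉ votes among the subsets of C, using shared subsets only once the
unshared ones are exhausted, and spend the z-budget B = ⌊b N⌋ on the remaining shared subsets.
Then y gets no votes over C' unless A > N - M, in which case it gets A - (N - M) against
N - M + min(B, N - A) for z; both comparisons follow from A + B ≤ N and from the failed
certification condition, which reads A + 2M ≤ B + 2N.
-/

section Labelling

variable {α β : Type*} [DecidableEq α] [DecidableEq β]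

theorem filter_ite_ite_eq_inter_left {Y Z S : Finset α} {y z w : β} (hwy : w ≠ y)
    (hyz : y ≠ z) :
    S.filter (fun T => (if T ∈ Y then y else if T ∈ Z then z else w) = y) = S ∩ Y := by
  ext T
  by_cases hY : T ∈ Y <;> by_cases hZ : T ∈ Z <;> simp [hY, hZ, hwy, hyz.symm]

theorem filter_ite_ite_eq_inter_right {Y Z S : Finset α} {y z w : β} (hYZ : Disjoint Y Z)
    (hwz : w ≠ z) (hyz : y ≠ z) :
    S.filter (fun T => (if T ∈ Y then y else if T ∈ Z then z else w) = z) = S ∩ Z := by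
  ext T
  by_cases hY : T ∈ Y <;> by_cases hZ : T ∈ Z <;> simp [hY, hZ, hwz, hyz]
  exact (disjoint_left.mp hYZ hY hZ).elim

end Labelling

section Subsets

variable {α : Type*} [DecidableEq α]

theorem powersetCard_inter (k : ℕ) (s t : Finset α) :
    powersetCard k (s ∩ t) = powersetCard k s ∩ powersetCard k t := by
  ext T
  simp only [mem_powersetCard, mem_inter, subset_inter_iff]
  tauto

theorem exists_subset_card_eq_card_inter_eq {s t : Finset α} {c : ℕ} (hc : c ≤ #s) :
    ∃ Y ⊆ s, #Y = c ∧ #(Y ∩ t) = c - #(s \ t) := by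
  obtain ⟨Y₁, hY₁, hY₁card⟩ := exists_subset_card_eq (min_le_right c #(s \ t))
  obtain ⟨Y₂, hY₂, hY₂card⟩ := exists_subset_card_eq
    (show c - #(s \ t) ≤ #(s ∩ t) by have := card_sdiff_add_card_inter s t; omega)
  have hdisj : Disjoint Y₁ Y₂ :=
    disjoint_of_subset_left hY₁ (disjoint_of_subset_right hY₂ (disjoint_sdiff_inter s t))
  have hinter : (Y₁ ∪ Y₂) ∩ t = Y₂ := by
    ext T
    have h₁ := @hY₁ T
    have h₂ := @hY₂ T
    simp only [mem_inter, mem_union, mem_sdiff] at h₁ h₂ ⊢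
    tauto
  refine ⟨Y₁ ∪ Y₂, union_subset (hY₁.trans sdiff_subset) (hY₂.trans inter_subset_left),
    ?_, ?_⟩
  · rw [card_union_of_disjoint hdisj]
    omega
  · rw [hinter, hY₂card]

theorem exists_disjoint_flipping_vote {P P' : Finset α} {A B : ℕ} (hAB : A + B ≤ #P)
    (hshared : A + 2 * #(P ∩ P') ≤ B + #P + #P') :
    ∃ Y Z : Finset α, Disjoint Y Z ∧ #(P ∩ Y) = A ∧ #(P ∩ Z) ≤ B ∧
      #(P' ∩ Y) ≤ #(P' ∩ Z) := by
  obtain ⟨Y, hYP, hYcard, hYP'⟩ :=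
    exists_subset_card_eq_card_inter_eq (t := P') (show A ≤ #P by omega)
  obtain ⟨Z₀, hZ₀, hZ₀card⟩ := exists_subset_card_eq (min_le_right B #((P ∩ P') \ Y))
  have hZ₀P : Z₀ ⊆ P := hZ₀.trans (sdiff_subset.trans inter_subset_left)
  have hZ₀P' : Z₀ ⊆ P' := hZ₀.trans (sdiff_subset.trans inter_subset_right)
  have hZ₀Y : Disjoint Z₀ Y := disjoint_of_subset_left hZ₀ sdiff_disjoint
  have hZ₀new : Disjoint Z₀ (P' \ P) := disjoint_of_subset_left hZ₀P disjoint_sdiff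
  have hP_Z : P ∩ (Z₀ ∪ P' \ P) = Z₀ := by
    rw [inter_union_distrib_left, inter_eq_right.mpr hZ₀P, inter_sdiff_self, union_empty]
  have hP'_Z : P' ∩ (Z₀ ∪ P' \ P) = Z₀ ∪ P' \ P :=
    inter_eq_right.mpr (union_subset hZ₀P' sdiff_subset)
  have hrest : #((P ∩ P') \ Y) = #(P ∩ P') - #(Y ∩ P') := by
    rw [card_sdiff, ← inter_assoc, inter_eq_left.mpr hYP]
  have hsd := card_sdiff_add_card_inter P P'
  have hsd' := card_sdiff_add_card_inter P' P
  rw [inter_comm P' P] at hsd'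
  refine ⟨Y, Z₀ ∪ P' \ P, disjoint_union_right.mpr ⟨hZ₀Y.symm, ?_⟩, ?_, ?_, ?_⟩
  · exact disjoint_of_subset_left hYP disjoint_sdiff
  · rw [inter_eq_right.mpr hYP, hYcard]
  · rw [hP_Z, hZ₀card]
    exact min_le_left _ _
  · rw [hP'_Z, card_union_of_disjoint hZ₀new, hZ₀card, inter_comm, hYP', hrest, hYP']
    omega

end Subsets

section Rounding

variable {a b : ℝ} {N : ℕ}

theorem ceil_mul_add_floor_mul_le (ha : 0 ≤ a) (hb : 0 ≤ b) (hab : a + b ≤ 1) :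
    ⌈a * N⌉₊ + ⌊b * N⌋₊ ≤ N := by
  rw [← Nat.ceil_add_natCast (by positivity), Nat.ceil_le]
  have hfloor : (⌊b * N⌋₊ : ℝ) ≤ b * N := Nat.floor_le (by positivity)
  nlinarith [(N.cast_nonneg : (0 : ℝ) ≤ N)]

theorem ceil_mul_add_two_mul_le {M : ℕ} (hN : 0 < N) (ha : 0 ≤ a) (hb : 0 ≤ b)
    (h : (⌈a * N⌉ : ℝ) / N - (⌊b * N⌋ : ℝ) / N ≤ 2 - 2 * (M : ℝ) / N) :
    ⌈a * N⌉₊ + 2 * M ≤ ⌊b * N⌋₊ + 2 * N := by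
  have hN' : (0 : ℝ) < N := by exact_mod_cast hN
  rw [← natCast_ceil_eq_intCast_ceil (by positivity),
    ← natCast_floor_eq_intCast_floor (by positivity)] at h
  have h' : ((⌈a * N⌉₊ : ℝ) - ⌊b * N⌋₊) / N ≤ (2 * N - 2 * M) / N := by
    rwa [sub_div, sub_div, mul_div_cancel_right₀ _ hN'.ne']
  rw [div_le_div_iff_of_pos_right hN'] at h'
  exact_mod_cast (by linarith : (⌈a * N⌉₊ : ℝ) + 2 * M ≤ ⌊b * N⌋₊ + 2 * N)

end Rounding

theorem flcertP_tightness_general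
    {Client Label : Type} [DecidableEq Client] [DecidableEq Label]
    (n k : ℕ) (hkn : k ≤ n)
    (C : Finset Client) (hC : C.card = n)
    (y z : Label) (hyz : y ≠ z) (hthird : ∃ w : Label, w ≠ y ∧ w ≠ z)
    (a b : ℝ) (hb0 : 0 ≤ b) (hba : b ≤ a) (hab1 : a + b ≤ 1)
    (C' : Finset Client) (hC' : C'.card = n)
    (hfail : (⌈a * (Nat.choose n k : ℝ)⌉ : ℝ) / (Nat.choose n k : ℝ)
           - (⌊b * (Nat.choose n k : ℝ)⌋ : ℝ) / (Nat.choose n k : ℝ)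
           ≤ 2 - 2 * (Nat.choose (n - (C' \ C).card) k : ℝ) / (Nat.choose n k : ℝ)) :
    ∃ f : Finset Client → Label,
      a ≤ labelProb k f C y ∧
      labelProb k f C z ≤ b ∧
      labelCount k f C' y ≤ labelCount k f C' z := by
  obtain ⟨w, hwy, hwz⟩ := hthird
  have ha : 0 ≤ a := hb0.trans hba
  have hN : (0 : ℝ) < n.choose k := by exact_mod_cast Nat.choose_pos hkn
  have hinter : #(powersetCard k C ∩ powersetCard k C') = (n - #(C' \ C)).choose k := by
    have := card_sdiff_add_card_inter C' C
    rw [← powersetCard_inter, card_powersetCard, inter_comm]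
    congr 1
    omega
  obtain ⟨Y, Z, hYZ, hY, hZ, hvote⟩ :=
    exists_disjoint_flipping_vote (P := powersetCard k C) (P' := powersetCard k C')
      (A := ⌈a * n.choose k⌉₊) (B := ⌊b * n.choose k⌋₊)
      (by rw [card_powersetCard, hC]; exact ceil_mul_add_floor_mul_le ha hb0 hab1)
      (by
        rw [hinter, card_powersetCard, card_powersetCard, hC, hC']
        linarith [ceil_mul_add_two_mul_le (Nat.choose_pos hkn) ha hb0 hfail])
  refine ⟨fun T => if T ∈ Y then y else if T ∈ Z then z else w, ?_, ?_, ?_⟩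
  · rw [labelProb, labelCount, filter_ite_ite_eq_inter_left hwy hyz, hY, hC, le_div_iff₀ hN]
    exact Nat.le_ceil _
  · rw [labelProb, labelCount, filter_ite_ite_eq_inter_right hYZ hwz hyz, hC, div_le_iff₀ hN]
    exact (Nat.cast_le.mpr hZ).trans (Nat.floor_le (by positivity))
  · rwa [labelCount, labelCount, filter_ite_ite_eq_inter_left hwy hyz,
      filter_ite_ite_eq_inter_right hYZ hwz hyz]

theorem flcertP_tightness
    {Client Label : Type} [DecidableEq Client] [DecidableEq Label]
    (n k : ℕ) (hk1 : 1 ≤ k) (hkn : k ≤ n)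
    (C : Finset Client) (hC : C.card = n)
    (y z : Label) (hyz : y ≠ z) (hthird : ∃ w : Label, w ≠ y ∧ w ≠ z)
    (a b : ℝ) (hb0 : 0 ≤ b) (hba : b ≤ a) (hab1 : a + b ≤ 1)
    (C' : Finset Client) (hC' : C'.card = n) (hm1 : 1 ≤ (C' \ C).card)
    (hfail : (⌈a * (Nat.choose n k : ℝ)⌉ : ℝ) / (Nat.choose n k : ℝ)
           - (⌊b * (Nat.choose n k : ℝ)⌋ : ℝ) / (Nat.choose n k : ℝ)
           ≤ 2 - 2 * (Nat.choose (n - (C' \ C).card) k : ℝ) / (Nat.choose n k : ℝ)) :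
    ∃ f : Finset Client → Label,
      a ≤ labelProb k f C y ∧
      labelProb k f C z ≤ b ∧
      labelCount k f C' y ≤ labelCount k f C' z :=
  flcertP_tightness_general n k hkn C hC y z hyz hthird a b hb0 hba hab1 C' hC' hfail
end

section
/- (Tightness, Case 1: m > n − k.) Let C and C' be finite sets of clients with |C| = |C'| = n, let k satisfy k ≤ n and n − |C' \ C| < k (so that no k-element subset of C ∩ C' exists), let y, z be distinct labels such that there exists a third label distinct from both, and let a, b be real numbers with 0 ≤ a, 0 ≤ b, and a + b ≤ 1. Then there exists a function f : Finset Client → Label such that N_y(C, f) = ⌈a·C(n,k)⌉, N_z(C, f) = ⌊b·C(n,k)⌋, f T = z for every k-element subset T of C' (hence N_z(C', f) = C(n,k) and N_y(C', f) = 0). -/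
/-! The sets of `k`-subsets of `C` and of `C'` are disjoint, since a common `k`-subset would lie
in `C ∩ C'`, which is too small. Choose disjoint families `A`, `B` of `k`-subsets of `C` with
`|A| = ⌈a·C(n,k)⌉` and `|B| = ⌊b·C(n,k)⌋`, which fit because `⌈a N⌉ + ⌊b N⌋ ≤ N` when `a + b ≤ 1`.
Label `A` by `y`, `B` and every `k`-subset of `C'` by `z`, and everything else by the third
label. -/

open Finset

theorem Int.ceil_add_floor_le {α : Type*} [Ring α] [LinearOrder α] [IsStrictOrderedRing α]
    [FloorRing α] {x y : α} {m : ℤ} (h : x + y ≤ m) : ⌈x⌉ + ⌊y⌋ ≤ m := by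
  have : ⌈x⌉ ≤ m - ⌊y⌋ := by
    rw [Int.ceil_le]
    push_cast
    exact (le_sub_iff_add_le.mpr h).trans (sub_le_sub_left (Int.floor_le y) _)
  omega

theorem Finset.disjoint_powersetCard_of_card_inter_lt {α : Type*} [DecidableEq α]
    {s t : Finset α} {k : ℕ} (h : #(s ∩ t) < k) :
    Disjoint (s.powersetCard k) (t.powersetCard k) := by
  refine disjoint_left.mpr fun u hus hut => ?_
  rw [mem_powersetCard] at hus hut
  have := card_le_card (subset_inter hus.1 hut.1)
  omega

theorem Finset.exists_disjoint_subsets_card_eq {α : Type*} [DecidableEq α] {s : Finset α}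
    {p q : ℕ} (h : p + q ≤ #s) :
    ∃ A ⊆ s, ∃ B ⊆ s, Disjoint A B ∧ #A = p ∧ #B = q := by
  obtain ⟨A, hAs, hA⟩ := exists_subset_card_eq (show p ≤ #s by omega)
  obtain ⟨B, hBs, hB⟩ := exists_subset_card_eq (s := s \ A) (n := q)
    (by rw [card_sdiff_of_subset hAs]; omega)
  exact ⟨A, hAs, B, hBs.trans sdiff_subset, disjoint_of_subset_right hBs disjoint_sdiff, hA, hB⟩

theorem exists_labelling_card_filter_eq {α β : Type*} [DecidableEq α] [DecidableEq β]
    {P Q : Finset α} (hPQ : Disjoint P Q) {y z w : β} (hyz : y ≠ z) (hwy : w ≠ y)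
    (hwz : w ≠ z) {p q : ℕ} (hpq : p + q ≤ #P) :
    ∃ f : α → β, #{x ∈ P | f x = y} = p ∧ #{x ∈ P | f x = z} = q ∧ ∀ x ∈ Q, f x = z := by
  obtain ⟨A, hAP, B, hBP, hAB, hA, hB⟩ := exists_disjoint_subsets_card_eq hpq
  set f : α → β := fun x => if x ∈ A then y else if x ∈ B ∪ Q then z else w
  have hfy : ∀ x ∈ P, f x = y ↔ x ∈ A := by
    intro x hxP
    by_cases hxA : x ∈ A
    · simp [f, hxA]
    · simp only [f, hxA, if_false, iff_false]
      split_ifs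
      · exact hyz.symm
      · exact hwy
  have hfz : ∀ x ∈ P, f x = z ↔ x ∈ B := by
    intro x hxP
    have hxQ : x ∉ Q := disjoint_left.mp hPQ hxP
    by_cases hxA : x ∈ A
    · simp [f, hxA, hyz, disjoint_left.mp hAB hxA]
    · by_cases hxB : x ∈ B <;> simp [f, hxA, hxB, hxQ, hwz]
  refine ⟨f, ?_, ?_, fun x hxQ => ?_⟩
  · rw [filter_congr hfy, filter_mem_eq_inter, inter_eq_right.mpr hAP, hA]
  · rw [filter_congr hfz, filter_mem_eq_inter, inter_eq_right.mpr hBP, hB]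
  · have hxA : x ∉ A := fun hxA => disjoint_left.mp hPQ (hAP hxA) hxQ
    simp [f, hxA, hxQ]

theorem labelCount_eq_choose_of_forall {Client Label : Type} [DecidableEq Client]
    [DecidableEq Label] {k n : ℕ} {f : Finset Client → Label} {S : Finset Client} {j : Label}
    (hS : #S = n) (hf : ∀ T ∈ S.powersetCard k, f T = j) :
    labelCount k f S j = n.choose k := by
  rw [labelCount, filter_true_of_mem hf, card_powersetCard, hS]

theorem labelCount_eq_zero_of_forall {Client Label : Type} [DecidableEq Client]
    [DecidableEq Label] {k : ℕ} {f : Finset Client → Label} {S : Finset Client} {j : Label}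
    (hf : ∀ T ∈ S.powersetCard k, f T ≠ j) :
    labelCount k f S j = 0 := by
  rw [labelCount, filter_false_of_mem hf, card_empty]

theorem flcertP_tightness_case1_general
    {Client Label : Type} [DecidableEq Client] [DecidableEq Label]
    (n k : ℕ)
    (C C' : Finset Client) (hC : C.card = n) (hC' : C'.card = n)
    (hbig : n - (C' \ C).card < k)
    (y z : Label) (hyz : y ≠ z) (hthird : ∃ w : Label, w ≠ y ∧ w ≠ z)
    (a b : ℝ) (ha0 : 0 ≤ a) (hb0 : 0 ≤ b) (hab1 : a + b ≤ 1) :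
    ∃ f : Finset Client → Label,
      (labelCount k f C y : ℤ) = ⌈a * (Nat.choose n k : ℝ)⌉ ∧
      (labelCount k f C z : ℤ) = ⌊b * (Nat.choose n k : ℝ)⌋ ∧
      (∀ T ∈ C'.powersetCard k, f T = z) ∧
      labelCount k f C' z = Nat.choose n k ∧
      labelCount k f C' y = 0 := by
  obtain ⟨w, hwy, hwz⟩ := hthird
  set N := n.choose k
  have hdisj : Disjoint (C.powersetCard k) (C'.powersetCard k) := by
    apply disjoint_powersetCard_of_card_inter_lt
    have := card_inter_add_card_sdiff C' C
    rw [inter_comm]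
    omega
  have hp : 0 ≤ ⌈a * N⌉ := Int.ceil_nonneg (by positivity)
  have hq : 0 ≤ ⌊b * N⌋ := Int.floor_nonneg.mpr (by positivity)
  have hpq : ⌈a * N⌉ + ⌊b * N⌋ ≤ N :=
    Int.ceil_add_floor_le (by push_cast; nlinarith [(Nat.cast_nonneg N : (0 : ℝ) ≤ N)])
  obtain ⟨f, hfy, hfz, hfC'⟩ := exists_labelling_card_filter_eq hdisj hyz hwy hwz
    (p := ⌈a * N⌉.toNat) (q := ⌊b * N⌋.toNat) (by rw [card_powersetCard, hC]; omega)
  refine ⟨f, ?_, ?_, hfC', labelCount_eq_choose_of_forall hC' hfC',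
    labelCount_eq_zero_of_forall fun T hT => (hfC' T hT).symm ▸ hyz.symm⟩
  · rw [labelCount, hfy, Int.toNat_of_nonneg hp]
  · rw [labelCount, hfz, Int.toNat_of_nonneg hq]

theorem flcertP_tightness_case1
    {Client Label : Type} [DecidableEq Client] [DecidableEq Label]
    (n k : ℕ) (hkn : k ≤ n)
    (C C' : Finset Client) (hC : C.card = n) (hC' : C'.card = n)
    (hbig : n - (C' \ C).card < k)
    (y z : Label) (hyz : y ≠ z) (hthird : ∃ w : Label, w ≠ y ∧ w ≠ z)
    (a b : ℝ) (ha0 : 0 ≤ a) (hb0 : 0 ≤ b) (hab1 : a + b ≤ 1) :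
    ∃ f : Finset Client → Label,
      (labelCount k f C y : ℤ) = ⌈a * (Nat.choose n k : ℝ)⌉ ∧
      (labelCount k f C z : ℤ) = ⌊b * (Nat.choose n k : ℝ)⌋ ∧
      (∀ T ∈ C'.powersetCard k, f T = z) ∧
      labelCount k f C' z = Nat.choose n k ∧
      labelCount k f C' y = 0 :=
  flcertP_tightness_case1_general n k C C' hC hC' hbig y z hyz hthird a b ha0 hb0 hab1
end

section
/- (Tightness, Case 4.) Let C and C' be finite sets of clients with |C| = |C'| = n, put m := |C' \ C| and q := C(n−m, k), and assume 1 ≤ m, 1 ≤ k, and k < n − m. Let y, z be distinct labels such that there exists a third label distinct from both, and let a, b be real numbers with a·C(n,k) > C(n,k) − q, 0 ≤ b ≤ 1 − a, and suppose ⌈a·C(n,k)⌉/C(n,k) − ⌊b·C(n,k)⌋/C(n,k) ≤ 2 − 2·q/C(n,k). Then there exists a function f : Finset Client → Label such that N_y(C, f) = ⌈a·C(n,k)⌉, N_z(C, f) = ⌊b·C(n,k)⌋, N_y(C', f) = ⌈a·C(n,k)⌉ + q − C(n,k), N_z(C', f) = ⌊b·C(n,k)⌋ + C(n,k) − q, and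 N_y(C', f) ≤ N_z(C', f). -/
/-
Only `k`-subsets lying in `C ∩ C'` are seen by both label counts, and there are `q` of them; the
other `C(n,k) - q` subsets of each side are private to it. Give every subset private to `C` the
label `y` and every subset private to `C'` the label `z`; then choose disjoint families of
`⌈a C(n,k)⌉ + q - C(n,k)` shared subsets labelled `y` and `⌊b C(n,k)⌋` shared subsets labelled `z`,
and label everything else by the third label. The hypotheses on `a` and `b` say exactly that
these two numbers are nonnegative, fit together into the `q` shared subsets, and leave
`N_y(C') ≤ N_z(C')`.
-/

open Finset

theorem powersetCard_inter_powersetCard {α : Type*} [DecidableEq α] (k : ℕ) (s t : Finset α) :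
    powersetCard k s ∩ powersetCard k t = powersetCard k (s ∩ t) := by
  ext u
  simp only [mem_inter, mem_powersetCard, subset_inter_iff]
  tauto

theorem ceil_add_floor_le_of_add_le {R : Type*} [Ring R] [LinearOrder R] [IsStrictOrderedRing R]
    [FloorRing R] {x y : R} {c : ℤ} (h : x + y ≤ c) : ⌈x⌉ + ⌊y⌋ ≤ c := by
  rw [← le_sub_iff_add_le, Int.ceil_le, Int.cast_sub]
  exact (le_sub_iff_add_le.mpr h).trans (sub_le_sub_left (Int.floor_le y) _)

theorem exists_labelling_of_add_le_card_inter {α Label : Type*} [DecidableEq α]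
    [DecidableEq Label] {A B : Finset α} {s t : ℕ} (hst : s + t ≤ #(A ∩ B))
    {y z w : Label} (hyz : y ≠ z) (hwy : w ≠ y) (hwz : w ≠ z) :
    ∃ f : α → Label,
      #(A.filter (f · = y)) = s + #(A \ B) ∧ #(A.filter (f · = z)) = t ∧
      #(B.filter (f · = y)) = s ∧ #(B.filter (f · = z)) = t + #(B \ A) := by
  obtain ⟨Y, hY, rfl⟩ := exists_subset_card_eq (le_of_add_le_left hst)
  obtain ⟨Z, hZ, rfl⟩ := exists_subset_card_eq (show t ≤ #((A ∩ B) \ Y) by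
    rw [card_sdiff_of_subset hY]; omega)
  rw [subset_iff] at hY hZ
  refine ⟨fun x => if x ∈ Y ∪ A \ B then y else if x ∈ Z ∪ B \ A then z else w,
    ?_, ?_, ?_, ?_⟩
  · rw [← card_union_of_disjoint (disjoint_left.mpr fun x hx => by grind)]
    congr 1; ext x; grind
  · congr 1; ext x; grind
  · congr 1; ext x; grind
  · rw [← card_union_of_disjoint (disjoint_left.mpr fun x hx => by grind)]
    congr 1; ext x; grind

theorem flcertP_tightness_case4_general
    {Client Label : Type} [DecidableEq Client] [DecidableEq Label]
    (n k : ℕ)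
    (C C' : Finset Client) (hC : C.card = n) (hC' : C'.card = n)
    (m : ℕ) (hm : m = (C' \ C).card)
    (q : ℕ) (hq : q = Nat.choose (n - m) k)
    (hknm : k < n - m)
    (y z : Label) (hyz : y ≠ z) (hthird : ∃ w : Label, w ≠ y ∧ w ≠ z)
    (a b : ℝ)
    (ha : a * (Nat.choose n k : ℝ) > (Nat.choose n k : ℝ) - (q : ℝ))
    (hb0 : 0 ≤ b) (hb : b ≤ 1 - a)
    (hfail : (⌈a * (Nat.choose n k : ℝ)⌉ : ℝ) / (Nat.choose n k : ℝ)
           - (⌊b * (Nat.choose n k : ℝ)⌋ : ℝ) / (Nat.choose n k : ℝ)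
           ≤ 2 - 2 * (q : ℝ) / (Nat.choose n k : ℝ)) :
    ∃ f : Finset Client → Label,
      (labelCount k f C y : ℤ) = ⌈a * (Nat.choose n k : ℝ)⌉ ∧
      (labelCount k f C z : ℤ) = ⌊b * (Nat.choose n k : ℝ)⌋ ∧
      (labelCount k f C' y : ℤ) = ⌈a * (Nat.choose n k : ℝ)⌉ + (q : ℤ) - (Nat.choose n k : ℤ) ∧
      (labelCount k f C' z : ℤ) = ⌊b * (Nat.choose n k : ℝ)⌋ + (Nat.choose n k : ℤ) - (q : ℤ) ∧
      labelCount k f C' y ≤ labelCount k f C' z := by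
  obtain ⟨w, hwy, hwz⟩ := hthird
  set N := n.choose k
  have hN : (0 : ℝ) < N := mod_cast Nat.choose_pos (hknm.le.trans (n.sub_le m))
  have hyC : (N : ℤ) - q < ⌈a * N⌉ := Int.lt_ceil.mpr (by push_cast; linarith)
  have hzC : 0 ≤ ⌊b * N⌋ := Int.floor_nonneg.mpr (by positivity)
  have hsum : ⌈a * N⌉ + ⌊b * N⌋ ≤ N := ceil_add_floor_le_of_add_le (by push_cast; nlinarith)
  have hdiff : ⌈a * N⌉ - ⌊b * N⌋ ≤ 2 * N - 2 * q := by
    rw [div_sub_div_same, sub_div' hN.ne', div_le_div_iff_of_pos_right hN] at hfail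
    exact_mod_cast hfail
  have hshared : #(powersetCard k C ∩ powersetCard k C') = q := by
    have := card_sdiff_add_card_inter C' C
    rw [powersetCard_inter_powersetCard, card_powersetCard, inter_comm, hq]
    congr 1; omega
  obtain ⟨f, hCy, hCz, hC'y, hC'z⟩ := exists_labelling_of_add_le_card_inter
    (A := powersetCard k C) (B := powersetCard k C')
    (s := (⌈a * N⌉ + q - N).toNat) (t := ⌊b * N⌋.toNat) (by omega) hyz hwy hwz
  have hprivate : #(powersetCard k C \ powersetCard k C') + q = N := by
    rw [← hshared, card_sdiff_add_card_inter, card_powersetCard, hC]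
  have hprivate' : #(powersetCard k C' \ powersetCard k C) + q = N := by
    rw [← hshared, inter_comm, card_sdiff_add_card_inter, card_powersetCard, hC']
  refine ⟨f, ?_, ?_, ?_, ?_, ?_⟩ <;> simp only [labelCount] <;> omega

theorem flcertP_tightness_case4
    {Client Label : Type} [DecidableEq Client] [DecidableEq Label]
    (n k : ℕ)
    (C C' : Finset Client) (hC : C.card = n) (hC' : C'.card = n)
    (m : ℕ) (hm : m = (C' \ C).card)
    (q : ℕ) (hq : q = Nat.choose (n - m) k)
    (hm1 : 1 ≤ m) (hk1 : 1 ≤ k) (hknm : k < n - m)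
    (y z : Label) (hyz : y ≠ z) (hthird : ∃ w : Label, w ≠ y ∧ w ≠ z)
    (a b : ℝ)
    (ha : a * (Nat.choose n k : ℝ) > (Nat.choose n k : ℝ) - (q : ℝ))
    (hb0 : 0 ≤ b) (hb : b ≤ 1 - a)
    (hfail : (⌈a * (Nat.choose n k : ℝ)⌉ : ℝ) / (Nat.choose n k : ℝ)
           - (⌊b * (Nat.choose n k : ℝ)⌋ : ℝ) / (Nat.choose n k : ℝ)
           ≤ 2 - 2 * (q : ℝ) / (Nat.choose n k : ℝ)) :
    ∃ f : Finset Client → Label,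
      (labelCount k f C y : ℤ) = ⌈a * (Nat.choose n k : ℝ)⌉ ∧
      (labelCount k f C z : ℤ) = ⌊b * (Nat.choose n k : ℝ)⌋ ∧
      (labelCount k f C' y : ℤ) = ⌈a * (Nat.choose n k : ℝ)⌉ + (q : ℤ) - (Nat.choose n k : ℤ) ∧
      (labelCount k f C' z : ℤ) = ⌊b * (Nat.choose n k : ℝ)⌋ + (Nat.choose n k : ℤ) - (q : ℤ) ∧
      labelCount k f C' y ≤ labelCount k f C' z :=
  flcertP_tightness_case4_general n k C C' hC hC' m hm q hq hknm y z hyz hthird a b ha hb0 hb hfail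
end

section
/- (Certified security level of FLCert-D.) Let L ≥ 2 and N ≥ 1 be natural numbers, and let h : Fin N → Fin L assign to each of N groups the label its global model predicts for a fixed test input. Let y := F(h) be the ensemble prediction, let z be the least label among the labels j ≠ y that maximize n_j(h) over all j ≠ y, and let m be a natural number satisfying 2·m + (1 if z < y else 0) ≤ n_y(h) − n_z(h). Then for every h' : Fin N → Fin L with |{g : h' g ≠ h g}| ≤ m (i.e., at most m groups change their predicted label), one has F(h') = y. -/
open Finset

/-- Label frequency: the number of groups `g` whose predicted label is `j`. -/
def freq {N L : ℕ} (h : Fin N → Fin L) (j : Fin L) : ℕ :=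
  (Finset.univ.filter (fun g => h g = j)).card

/-- The ensemble prediction: the least label among those maximizing the label frequency
(ties are broken by selecting the smallest label index). -/
noncomputable def ensemble {N L : ℕ} (hL : 0 < L) (h : Fin N → Fin L) : Fin L :=
  (Finset.univ.filter (fun j => ∀ i : Fin L, freq h i ≤ freq h j)).min' (by
    obtain ⟨j, _, hj⟩ := Finset.exists_max_image Finset.univ (freq h)
      (Finset.univ_nonempty_iff.mpr ⟨⟨0, hL⟩⟩)
    exact ⟨j, Finset.mem_filter.mpr ⟨Finset.mem_univ _, fun i => hj i (Finset.mem_univ i)⟩⟩)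

/-! Changing the labels of `m` groups moves every label frequency by at most `m`. The label `y`
beats the runner-up `z` of `h` by more than `2m`, counting a tie as a loss for `y` when
`z < y`; comparing every other label with `z` instead of `y` then shows that `y` still wins
the tie-broken vote after the change. -/

theorem card_filter_eq_le_add_card_filter_ne {ι α : Type*} [Fintype ι] [DecidableEq α]
    (f f' : ι → α) (a : α) :
    #{i | f' i = a} ≤ #{i | f i = a} + #{i | f' i ≠ f i} := by
  classical
  refine (card_le_card fun i hi => ?_).trans (card_union_le _ _)
  grind

theorem card_filter_eq_le_add_card_filter_ne' {ι α : Type*} [Fintype ι] [DecidableEq α]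
    (f f' : ι → α) (a : α) :
    #{i | f i = a} ≤ #{i | f' i = a} + #{i | f' i ≠ f i} := by
  simpa only [ne_comm] using card_filter_eq_le_add_card_filter_ne f' f a

/-- The indicator `[j < y]` records that `j` would win a tie against `y`. -/
theorem ensemble_eq_of_forall_freq_add_ite_le {N L : ℕ} (hL : 0 < L) (h : Fin N → Fin L)
    (y : Fin L) (hy : ∀ j, j ≠ y → freq h j + (if j < y then 1 else 0) ≤ freq h y) :
    ensemble hL h = y := by
  have hmax : ∀ i, freq h i ≤ freq h y := fun i => by
    by_cases hi : i = y
    · rw [hi]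
    · exact (Nat.le_add_right _ _).trans (hy i hi)
  refine le_antisymm (min'_le _ _ (by simpa using hmax)) (le_min' _ _ _ fun j hj => ?_)
  by_contra! hjy
  have := hy j hjy.ne
  simp only [mem_filter, mem_univ, true_and, if_pos hjy] at hj this
  exact absurd (hj y) (by omega)

theorem add_ite_le_of_isLeast_maximizer {α : Type*} [LinearOrder α] (c : α → ℕ) {y z j : α}
    (hzmax : ∀ i, i ≠ y → c i ≤ c z)
    (hzleast : ∀ j, j ≠ y → (∀ i, i ≠ y → c i ≤ c j) → z ≤ j) (hj : j ≠ y) :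
    c j + (if j < y then 1 else 0) ≤ c z + (if z < y then 1 else 0) := by
  rcases (hzmax j hj).lt_or_eq with hlt | heq
  · split_ifs <;> omega
  · have hzj : z ≤ j := hzleast j hj fun i hi => heq ▸ hzmax i hi
    rw [heq]
    split_ifs <;> first | omega | exact absurd (hzj.trans_lt ‹j < y›) ‹¬z < y›

theorem flcertD_certified_security
    (L N : ℕ) (hL : 2 ≤ L)
    (h : Fin N → Fin L)
    (y : Fin L)
    (z : Fin L)
    (hzmax : ∀ i : Fin L, i ≠ y → freq h i ≤ freq h z)
    (hzleast : ∀ j : Fin L, j ≠ y → (∀ i : Fin L, i ≠ y → freq h i ≤ freq h j) → z ≤ j)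
    (m : ℕ)
    (hm : 2 * (m : ℤ) + (if z < y then 1 else 0)
            ≤ (freq h y : ℤ) - (freq h z : ℤ)) :
    ∀ h' : Fin N → Fin L,
      (Finset.univ.filter (fun g => h' g ≠ h g)).card ≤ m →
      ensemble (by omega) h' = y := by
  intro h' hcard
  refine ensemble_eq_of_forall_freq_add_ite_le _ h' y fun j hj => ?_
  have hj_up : freq h' j ≤ freq h j + m := by
    have := card_filter_eq_le_add_card_filter_ne h h' j
    unfold freq; omega
  have hy_down : freq h y ≤ freq h' y + m := by
    have := card_filter_eq_le_add_card_filter_ne' h h' y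
    unfold freq; omega
  have hjz := add_ite_le_of_isLeast_maximizer (freq h) hzmax hzleast hj
  split_ifs at hm hjz ⊢ <;> omega
end
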